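/- Let \pi: \mathbb{Z}^d \times \mathbb{Z}^d \to \mathbb{R} be finitely supported with \sum_y \pi(x,y)=0 for all x, with \pi(x,y)=0 unless |y-x| \le L and |x| \le L(m-1), for some positive integer m and real L \ge 1. Define \hat\pi(k) = \sum_{x,y} e^{ik\cdot y}\pi(x,y). Then for all k \in \mathbb{R}^d, |\hat\pi(k) - k \cdot \nabla\hat\pi(0)| \le |k|^2 m L^2 \sum_{x,y} |\pi(x,y)|, where \nabla\hat\pi(0) = i\sum_{x,y} y\, \pi(x,y). -/

import Mathlib

/-!
Write `u = ⟪k, y⟫` and `s = ⟪k, x⟫`. Since every row of `π` sums to zero, the row-constant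
`exp (i s) - i s` can be subtracted from `exp (i u) - i u` inside the sum, leaving
`exp (i s) (exp (i t) - 1 - i t) + (exp (i s) - 1) i t` with `t = u - s`. The second-order Taylor
bound `|exp (i t) - 1 - i t| ≤ t² / 2` and `|exp (i s) - 1| ≤ |s|` bound this by
`t² / 2 + |s| |t| ≤ |k|² (L² / 2 + L (m - 1) L) ≤ |k|² m L²`.
-/

open Finset Complex ComplexConjugate

theorem Finset.sum_mul_eq_zero_of_sum_fiber_eq_zero {ι α R : Type*} [DecidableEq α]
    [NonUnitalNonAssocSemiring R] (s : Finset ι) (g : ι → α) (f : ι → R)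
    (hf : ∀ a, ∑ i ∈ s with g i = a, f i = 0) (h : α → R) :
    ∑ i ∈ s, h (g i) * f i = 0 := by
  rw [← sum_fiberwise_of_maps_to fun i hi => mem_image_of_mem g hi]
  refine sum_eq_zero fun a _ => ?_
  rw [sum_congr rfl fun i hi => by rw [(mem_filter.mp hi).2], ← mul_sum, hf a, mul_zero]

namespace Complex

theorem hasDerivAt_exp_I_mul_ofReal_sub_one_sub (u : ℝ) :
    HasDerivAt (fun t : ℝ => exp (I * t) - 1 - I * t) (I * (exp (I * u) - 1)) u := by
  have hlin : HasDerivAt (fun t : ℝ => I * t) I u := by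
    simpa using ofRealCLM.hasDerivAt.const_mul I
  exact ((hlin.cexp.sub_const 1).sub hlin).congr_deriv (by ring)

theorem norm_exp_I_mul_ofReal_sub_one_sub_le_of_nonneg {t : ℝ} (ht : 0 ≤ t) :
    ‖exp (I * t) - 1 - I * t‖ ≤ t ^ 2 / 2 := by
  have hbound := image_norm_le_of_norm_deriv_right_le_deriv_boundary
    (f := fun t : ℝ => exp (I * t) - 1 - I * t) (a := 0) (b := t) (B := fun t => t ^ 2 / 2)
    (B' := id)
    (fun u _ => (hasDerivAt_exp_I_mul_ofReal_sub_one_sub u).continuousAt.continuousWithinAt)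
    (fun u _ => (hasDerivAt_exp_I_mul_ofReal_sub_one_sub u).hasDerivWithinAt)
    (by simp) (fun u => by simpa using (hasDerivAt_pow 2 u).div_const 2)
    (fun u hu => by
      simpa [abs_of_nonneg hu.1] using Real.norm_exp_I_mul_ofReal_sub_one_le (x := u))
  exact hbound (Set.right_mem_Icc.mpr ht)

theorem norm_exp_I_mul_ofReal_sub_one_sub_le (t : ℝ) :
    ‖exp (I * t) - 1 - I * t‖ ≤ t ^ 2 / 2 := by
  rcases le_total 0 t with ht | ht
  · exact norm_exp_I_mul_ofReal_sub_one_sub_le_of_nonneg ht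
  · have hconj : exp (I * (-t : ℝ)) - 1 - I * (-t : ℝ) = conj (exp (I * t) - 1 - I * t) := by
      simp [← exp_conj, mul_comm]
    have h := norm_exp_I_mul_ofReal_sub_one_sub_le_of_nonneg (neg_nonneg.mpr ht)
    rwa [hconj, norm_conj, neg_sq] at h

theorem norm_exp_I_mul_sub_exp_I_mul_sub_le (s u : ℝ) :
    ‖exp (I * u) - exp (I * s) - I * (u - s : ℝ)‖ ≤ (u - s) ^ 2 / 2 + |s| * |u - s| := by
  set t := u - s
  have hsplit : exp (I * u) - exp (I * s) - I * t =
      exp (I * s) * (exp (I * t) - 1 - I * t) + (exp (I * s) - 1) * (I * t) := by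
    rw [show (u : ℂ) = s + t by push_cast [t]; ring, mul_add, exp_add]
    ring
  rw [hsplit]
  refine (norm_add_le _ _).trans ?_
  rw [norm_mul, norm_mul, norm_exp_I_mul_ofReal, one_mul, norm_mul, norm_I, one_mul, norm_real,
    Real.norm_eq_abs]
  gcongr
  · exact norm_exp_I_mul_ofReal_sub_one_sub_le t
  · exact Real.norm_exp_I_mul_ofReal_sub_one_le

end Complex

theorem norm_exp_I_mul_inner_sub_exp_I_mul_inner_sub_le {E : Type*} [NormedAddCommGroup E]
    [InnerProductSpace ℝ E] (k x y : E) :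
    ‖exp (I * inner ℝ k y) - exp (I * inner ℝ k x) - I * (inner ℝ k y - inner ℝ k x : ℝ)‖ ≤
      ‖k‖ ^ 2 * (‖y - x‖ ^ 2 / 2 + ‖x‖ * ‖y - x‖) := by
  have ht : |inner ℝ k y - inner ℝ k x| ≤ ‖k‖ * ‖y - x‖ := by
    rw [← inner_sub_right]; exact abs_real_inner_le_norm k (y - x)
  have hs : |inner ℝ k x| ≤ ‖k‖ * ‖x‖ := abs_real_inner_le_norm k x
  refine (norm_exp_I_mul_sub_exp_I_mul_sub_le _ _).trans ?_
  have ht2 : (inner ℝ k y - inner ℝ k x) ^ 2 ≤ (‖k‖ * ‖y - x‖) ^ 2 :=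
    sq_le_sq' (abs_le.mp ht).1 (abs_le.mp ht).2
  have hst := mul_le_mul hs ht (abs_nonneg _) (by positivity)
  nlinarith

theorem norm_sum_exp_I_mul_inner_sub_I_mul_sum_inner_le {α E : Type*} [DecidableEq α]
    [NormedAddCommGroup E] [InnerProductSpace ℝ E] (v : α → E) (k : E) (π : α → α → ℝ)
    (S : Finset (α × α)) {L R : ℝ} (hrow : ∀ x, ∑ p ∈ S with p.1 = x, π p.1 p.2 = 0)
    (hrange : ∀ x y, π x y ≠ 0 → ‖v y - v x‖ ≤ L ∧ ‖v x‖ ≤ R) :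
    ‖(∑ p ∈ S, exp (I * inner ℝ k (v p.2)) * (π p.1 p.2 : ℂ)) -
        I * ∑ p ∈ S, (inner ℝ k (v p.2) : ℂ) * (π p.1 p.2 : ℂ)‖ ≤
      ‖k‖ ^ 2 * (L ^ 2 / 2 + R * L) * ∑ p ∈ S, |π p.1 p.2| := by
  have hrow_const := S.sum_mul_eq_zero_of_sum_fiber_eq_zero Prod.fst (fun p => (π p.1 p.2 : ℂ))
    (fun x => by exact_mod_cast hrow x)
    (fun x => exp (I * inner ℝ k (v x)) - I * inner ℝ k (v x))
  have hsplit : (∑ p ∈ S, exp (I * inner ℝ k (v p.2)) * (π p.1 p.2 : ℂ)) -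
      I * ∑ p ∈ S, (inner ℝ k (v p.2) : ℂ) * (π p.1 p.2 : ℂ) =
      ∑ p ∈ S, (exp (I * inner ℝ k (v p.2)) - exp (I * inner ℝ k (v p.1)) -
        I * (inner ℝ k (v p.2) - inner ℝ k (v p.1) : ℝ)) * (π p.1 p.2 : ℂ) := by
    rw [mul_sum, ← sum_sub_distrib, ← sub_zero (∑ p ∈ S, _), ← hrow_const, ← sum_sub_distrib]
    refine sum_congr rfl fun p _ => ?_
    push_cast
    ring
  rw [hsplit, mul_sum]
  refine (norm_sum_le _ _).trans (sum_le_sum fun p _ => ?_)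
  rw [norm_mul, norm_real, Real.norm_eq_abs]
  rcases eq_or_ne (π p.1 p.2) 0 with h0 | h0
  · simp [h0]
  obtain ⟨hstep, hpos⟩ := hrange p.1 p.2 h0
  gcongr
  refine (norm_exp_I_mul_inner_sub_exp_I_mul_inner_sub_le k _ _).trans ?_
  have hR : 0 ≤ R := (norm_nonneg _).trans hpos
  gcongr

open Finset in
theorem fourier_transform_first_order_taylor_bound_general {d : ℕ} (L : ℝ)
    (m : ℕ)
    (π : (Fin d → ℤ) → (Fin d → ℤ) → ℝ)
    (S : Finset ((Fin d → ℤ) × (Fin d → ℤ)))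
    (hrow : ∀ x : Fin d → ℤ, ∑ p ∈ S.filter (fun p => p.1 = x), π p.1 p.2 = 0)
    (hrange : ∀ x y : Fin d → ℤ, π x y ≠ 0 →
      Real.sqrt (∑ i, ((y i : ℝ) - (x i : ℝ)) ^ 2) ≤ L ∧
      Real.sqrt (∑ i, ((x i : ℝ)) ^ 2) ≤ L * ((m : ℝ) - 1))
    (k : EuclideanSpace ℝ (Fin d)) :
    ‖(∑ p ∈ S,
            Complex.exp (Complex.I * ((∑ i, k i * (p.2 i : ℝ) : ℝ) : ℂ)) * (π p.1 p.2 : ℂ)) -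
          Complex.I * ∑ p ∈ S, ((∑ i, k i * (p.2 i : ℝ) : ℝ) : ℂ) * (π p.1 p.2 : ℂ)‖ ≤
      ‖k‖ ^ 2 * m * L ^ 2 * ∑ p ∈ S, |π p.1 p.2| := by
  set v : (Fin d → ℤ) → EuclideanSpace ℝ (Fin d) := fun x => WithLp.toLp 2 fun i => (x i : ℝ)
  have hphase : ∀ x, ∑ i, k i * (x i : ℝ) = inner ℝ k (v x) := fun x => by
    simp [v, PiLp.inner_apply, mul_comm]
  have hrange' : ∀ x y, π x y ≠ 0 → ‖v y - v x‖ ≤ L ∧ ‖v x‖ ≤ L * ((m : ℝ) - 1) := by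
    simpa [v, EuclideanSpace.norm_eq] using hrange
  have hradius : L ^ 2 / 2 + L * ((m : ℝ) - 1) * L ≤ m * L ^ 2 := by nlinarith [sq_nonneg L]
  simp only [hphase]
  calc _ ≤ ‖k‖ ^ 2 * (L ^ 2 / 2 + L * ((m : ℝ) - 1) * L) * ∑ p ∈ S, |π p.1 p.2| :=
        norm_sum_exp_I_mul_inner_sub_I_mul_sum_inner_le v k π S hrow hrange'
    _ ≤ ‖k‖ ^ 2 * (m * L ^ 2) * ∑ p ∈ S, |π p.1 p.2| := by gcongr
    _ = _ := by ring

open Finset in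
theorem fourier_transform_first_order_taylor_bound {d : ℕ} (L : ℝ) (hL : 1 ≤ L)
    (m : ℕ) (hm : 0 < m)
    (π : (Fin d → ℤ) → (Fin d → ℤ) → ℝ)
    (S : Finset ((Fin d → ℤ) × (Fin d → ℤ)))
    (hsupp : ∀ x y, π x y ≠ 0 → (x, y) ∈ S)
    (hrow : ∀ x : Fin d → ℤ, ∑ p ∈ S.filter (fun p => p.1 = x), π p.1 p.2 = 0)
    (hrange : ∀ x y : Fin d → ℤ, π x y ≠ 0 →
      Real.sqrt (∑ i, ((y i : ℝ) - (x i : ℝ)) ^ 2) ≤ L ∧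
      Real.sqrt (∑ i, ((x i : ℝ)) ^ 2) ≤ L * ((m : ℝ) - 1))
    (k : EuclideanSpace ℝ (Fin d)) :
    ‖(∑ p ∈ S,
            Complex.exp (Complex.I * ((∑ i, k i * (p.2 i : ℝ) : ℝ) : ℂ)) * (π p.1 p.2 : ℂ)) -
          Complex.I * ∑ p ∈ S, ((∑ i, k i * (p.2 i : ℝ) : ℝ) : ℂ) * (π p.1 p.2 : ℂ)‖ ≤
      ‖k‖ ^ 2 * m * L ^ 2 * ∑ p ∈ S, |π p.1 p.2| :=
  fourier_transform_first_order_taylor_bound_general L m π S hrow hrange k
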